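/- arXiv:2306.09315 — 4 statements merged into one kernel-verified Lean document; each statement's English description precedes it below -/
import Mathlib

section
/- Let G be a finite connected simple graph with vertices v₁,…,v_n and universal sink q (q adjacent to every v_i) such that G minus the sink is connected and each v_i has degree m in G. Let M be the reduced Laplacian of G, and let L = M + N where N is a symmetric integer matrix, zero on the diagonal, with entries in {0,2} supported on positions where M_{ij} = −1, such that each row of N contains exactly m₋ entries equal to 2; assume L is invertible over ℚ. Then a configuration c ∈ S⁺ for the chip-firing pair (L, M) is critical if and only if c is stable and there exists a legal firing sequence from c + (2m₋ + 1)·𝟙 to c, where 𝟙 is the all-ones vector. -/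
open Matrix

/-- `c ∈ S⁺` for the chip-firing pair `(L, M)`: every entry of `M·L⁻¹·c` (over ℚ) is
nonnegative. -/
def cfValid {n : ℕ} (L M : Matrix (Fin n) (Fin n) ℤ) (c : Fin n → ℤ) : Prop :=
  ∀ i, 0 ≤ (((M.map (Int.cast : ℤ → ℚ)) * (L.map (Int.cast : ℤ → ℚ))⁻¹).mulVec
    (fun j => (c j : ℚ))) i

/-- `c` is stable for the pair `(L, M)`: no single site can be legally fired. -/
def cfStable {n : ℕ} (L M : Matrix (Fin n) (Fin n) ℤ) (c : Fin n → ℤ) : Prop :=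
  ∀ i, ¬ cfValid L M (c - L.mulVec (Pi.single i 1))

/-- There is a legal firing sequence from `d` to `c`: firing the sites in the list `l`
one at a time, every intermediate configuration is valid and the final result is `c`. -/
def cfLegal {n : ℕ} (L M : Matrix (Fin n) (Fin n) ℤ) (d c : Fin n → ℤ) : Prop :=
  ∃ l : List (Fin n),
    (∀ t ≤ l.length, cfValid L M (d - L.mulVec (fun i => ((l.take t).count i : ℤ)))) ∧
    c = d - L.mulVec (fun i => (l.count i : ℤ))

/-- `c` is reachable for the pair `(L, M)`: there is a valid configuration `d` from which
every site can be fired, together with a legal firing sequence from `d` to `c`. -/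
def cfReachable {n : ℕ} (L M : Matrix (Fin n) (Fin n) ℤ) (c : Fin n → ℤ) : Prop :=
  ∃ d : Fin n → ℤ, cfValid L M d ∧
    (∀ i, cfValid L M (d - L.mulVec (Pi.single i 1))) ∧ cfLegal L M d c

/-- `c` is critical for the pair `(L, M)`: valid, stable and reachable. -/
def cfCritical {n : ℕ} (L M : Matrix (Fin n) (Fin n) ℤ) (c : Fin n → ℤ) : Prop :=
  cfValid L M c ∧ cfStable L M c ∧ cfReachable L M c

/-- `c` is z-superstable for the pair `(L, M)`: `c` is valid and for every nonzero
nonnegative integer vector `z`, `c - L·z` is not valid. -/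
def cfZSuperstable {n : ℕ} (L M : Matrix (Fin n) (Fin n) ℤ) (c : Fin n → ℤ) : Prop :=
  cfValid L M c ∧
    ∀ z : Fin n → ℤ, (∀ i, 0 ≤ z i) → z ≠ 0 → ¬ cfValid L M (c - L.mulVec z)

/-! ### Auxiliary machinery -/

/-- The rational "chip vector" `M L⁻¹ x` associated to a configuration. -/
noncomputable def Yq {n : ℕ} (L M : Matrix (Fin n) (Fin n) ℤ) (x : Fin n → ℤ) : Fin n → ℚ :=
  ((M.map (Int.cast : ℤ → ℚ)) * (L.map (Int.cast : ℤ → ℚ))⁻¹).mulVec (fun j => (x j : ℚ))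

lemma cfValid_iff {n : ℕ} (L M : Matrix (Fin n) (Fin n) ℤ) (x : Fin n → ℤ) :
    cfValid L M x ↔ ∀ i, 0 ≤ Yq L M x i := Iff.rfl

lemma cast_intVec {n : ℕ} (L : Matrix (Fin n) (Fin n) ℤ) (z : Fin n → ℤ) :
    (fun j => ((L.mulVec z) j : ℚ)) = (L.map (Int.cast : ℤ → ℚ)).mulVec (fun j => (z j : ℚ)) := by
  funext j
  simp only [Matrix.mulVec, dotProduct, Matrix.map_apply]
  push_cast
  rfl

lemma Yq_sub_apply {n : ℕ} (L M : Matrix (Fin n) (Fin n) ℤ)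
    (hLinv : IsUnit (L.map (Int.cast : ℤ → ℚ))) (x z : Fin n → ℤ) (i : Fin n) :
    Yq L M (x - L.mulVec z) i = Yq L M x i - ∑ j, (M i j : ℚ) * (z j : ℚ) := by
  have h1 : (fun j => (((x - L.mulVec z) j : ℤ) : ℚ))
      = (fun j => (x j : ℚ)) - (L.map (Int.cast : ℤ → ℚ)).mulVec (fun j => (z j : ℚ)) := by
    rw [← cast_intVec]
    funext j
    push_cast [Pi.sub_apply]
    ring
  unfold Yq
  rw [h1, Matrix.mulVec_sub, Matrix.mulVec_mulVec, Matrix.mul_assoc,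
    Matrix.nonsing_inv_mul _ ((Matrix.isUnit_iff_isUnit_det _).mp hLinv), Matrix.mul_one]
  simp [Matrix.mulVec, dotProduct, Matrix.map_apply]

/-- "No forbidden subconfiguration" predicate. -/
def NoForb {n : ℕ} (M : Matrix (Fin n) (Fin n) ℤ) (w : Fin n → ℚ) : Prop :=
  ∀ F : Finset (Fin n), F.Nonempty → ∃ v ∈ F, (∑ x ∈ F.erase v, -(M v x : ℚ)) ≤ w v

lemma noForb_step {n : ℕ} {M : Matrix (Fin n) (Fin n) ℤ}
    (Hoff : ∀ i j : Fin n, i ≠ j → M i j ≤ 0) (w : Fin n → ℚ) (u : Fin n)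
    (hw' : ∀ v, 0 ≤ w v - (M v u : ℚ)) (h : NoForb M w) :
    NoForb M (fun v => w v - (M v u : ℚ)) := by
  intro F hF
  by_contra hcon
  push_neg at hcon
  by_cases hu : u ∈ F
  · have hne : (F.erase u).Nonempty := by
      rw [Finset.nonempty_iff_ne_empty]
      intro h'
      have h1 := hcon u hu
      rw [h'] at h1
      simp only [Finset.sum_empty] at h1
      linarith [hw' u]
    obtain ⟨v, hvF', hv⟩ := h (F.erase u) hne
    have hvu : v ≠ u := (Finset.mem_erase.mp hvF').1
    have hvF : v ∈ F := (Finset.mem_erase.mp hvF').2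
    have hu' : u ∈ F.erase v := Finset.mem_erase.mpr ⟨hvu.symm, hu⟩
    have hsum : (∑ x ∈ F.erase v, -(M v x : ℚ))
        = -(M v u : ℚ) + ∑ x ∈ (F.erase u).erase v, -(M v x : ℚ) := by
      rw [Finset.erase_right_comm]
      exact (Finset.add_sum_erase _ _ hu').symm
    have hcv := hcon v hvF
    rw [hsum] at hcv
    linarith
  · obtain ⟨v, hvF, hv⟩ := h F hF
    have hvu : v ≠ u := fun e => hu (e ▸ hvF)
    have h0 : (M v u : ℚ) ≤ 0 := by exact_mod_cast Hoff v u hvu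
    have hcv := hcon v hvF
    linarith

lemma noForb_chain {n : ℕ} {M : Matrix (Fin n) (Fin n) ℤ}
    (Hoff : ∀ i j : Fin n, i ≠ j → M i j ≤ 0) :
    ∀ (l : List (Fin n)) (w : Fin n → ℚ),
      (∀ t ≤ l.length, ∀ v, 0 ≤ w v - ∑ j, (M v j : ℚ) * ((l.take t).count j : ℚ)) →
      NoForb M w →
      NoForb M (fun v => w v - ∑ j, (M v j : ℚ) * (l.count j : ℚ)) := by
  intro l
  induction l with
  | nil =>
    intro w _ hnf
    simpa using hnf
  | cons u l' ih =>
    intro w hpre hnf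
    have hcol : ∀ v : Fin n, (∑ j, (M v j : ℚ) * (if j = u then (1:ℚ) else 0)) = (M v u : ℚ) := by
      intro v
      simp [mul_ite]
    have hcnt : ∀ (L2 : List (Fin n)) (v : Fin n),
        (∑ j, (M v j : ℚ) * (((u :: L2).count j : ℕ) : ℚ))
        = (∑ j, (M v j : ℚ) * ((L2.count j : ℕ) : ℚ)) + (M v u : ℚ) := by
      intro L2 v
      have h1 : ∀ j : Fin n, (((u :: L2).count j : ℕ) : ℚ)
          = ((L2.count j : ℕ) : ℚ) + (if j = u then (1:ℚ) else 0) := by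
        intro j
        rcases eq_or_ne j u with h | h
        · subst h; simp [List.count_cons]
        · simp [List.count_cons, h, h.symm]
      calc (∑ j, (M v j : ℚ) * (((u :: L2).count j : ℕ) : ℚ))
          = ∑ j, ((M v j : ℚ) * ((L2.count j : ℕ) : ℚ)
              + (M v j : ℚ) * (if j = u then (1:ℚ) else 0)) :=
            Finset.sum_congr rfl fun j _ => by rw [h1 j, mul_add]
        _ = (∑ j, (M v j : ℚ) * ((L2.count j : ℕ) : ℚ))
              + ∑ j, (M v j : ℚ) * (if j = u then (1:ℚ) else 0) :=
            Finset.sum_add_distrib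
        _ = _ := by rw [hcol v]
    set w' : Fin n → ℚ := fun v => w v - (M v u : ℚ) with hw'def
    have hw' : ∀ v, 0 ≤ w' v := by
      intro v
      have h1 := hpre 1 (by simp [List.length_cons]) v
      rw [show (u :: l').take 1 = u :: ([] : List (Fin n)) by simp] at h1
      rw [hcnt [] v] at h1
      simp only [hw'def]
      simpa using h1
    have hnf' : NoForb M w' := noForb_step Hoff w u hw' hnf
    have hpre' : ∀ t ≤ l'.length, ∀ v,
        0 ≤ w' v - ∑ j, (M v j : ℚ) * ((l'.take t).count j : ℚ) := by
      intro t ht v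
      have h1 := hpre (t+1) (by simpa [List.length_cons] using Nat.succ_le_succ ht) v
      rw [List.take_succ_cons, hcnt (l'.take t) v] at h1
      simp only [hw'def]
      linarith
    have hres := ih w' hpre' hnf'
    have hfun : (fun v => w' v - ∑ j, (M v j : ℚ) * ((l'.count j : ℕ) : ℚ))
        = (fun v => w v - ∑ j, (M v j : ℚ) * (((u :: l').count j : ℕ) : ℚ)) := by
      funext v
      rw [hcnt l' v]
      simp only [hw'def]
      ring
    rwa [hfun] at hres

lemma burn_aux {n : ℕ} {M : Matrix (Fin n) (Fin n) ℤ}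
    (Hoff : ∀ i j : Fin n, i ≠ j → M i j ≤ 0)
    (Hrow : ∀ i, ∑ j, (M i j : ℚ) = 1)
    (q : Fin n → ℚ) (hnf : NoForb M q) :
    ∀ (k : ℕ) (S : Finset (Fin n)), Sᶜ.card = k →
      (∀ v, 0 ≤ q v + 1 - ∑ u ∈ S, (M v u : ℚ)) →
      ∃ l : List (Fin n), l.Nodup ∧ l.toFinset = Sᶜ ∧
        ∀ t ≤ l.length, ∀ v, 0 ≤ q v + 1 - ∑ u ∈ S ∪ (l.take t).toFinset, (M v u : ℚ) := by
  intro k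
  induction k with
  | zero =>
    intro S hcard hstate
    refine ⟨[], List.nodup_nil, ?_, ?_⟩
    · rw [List.toFinset_nil, eq_comm, ← Finset.card_eq_zero, hcard]
    · intro t ht v
      have : t = 0 := Nat.le_zero.mp ht
      subst this
      simpa using hstate v
  | succ k ih =>
    intro S hcard hstate
    have hne : Sᶜ.Nonempty := by
      rw [← Finset.card_pos, hcard]; omega
    obtain ⟨v, hvF, hv⟩ := hnf Sᶜ hne
    have hvS : v ∉ S := Finset.mem_compl.mp hvF
    have hstate' : ∀ x, 0 ≤ q x + 1 - ∑ u ∈ insert v S, (M x u : ℚ) := by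
      intro x
      rw [Finset.sum_insert hvS]
      rcases eq_or_ne x v with h | h
      · subst h
        have hsplit : (∑ u ∈ S, (M x u : ℚ)) + ∑ u ∈ Sᶜ, (M x u : ℚ) = 1 := by
          rw [Finset.sum_add_sum_compl]; exact Hrow x
        have herase : (M x x : ℚ) + ∑ u ∈ Sᶜ.erase x, (M x u : ℚ) = ∑ u ∈ Sᶜ, (M x u : ℚ) :=
          Finset.add_sum_erase Sᶜ (fun u => (M x u : ℚ)) hvF
        have hneg : (∑ u ∈ Sᶜ.erase x, -(M x u : ℚ)) = -∑ u ∈ Sᶜ.erase x, (M x u : ℚ) := by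
          rw [Finset.sum_neg_distrib]
        rw [hneg] at hv
        linarith
      · have hMx : (M x v : ℚ) ≤ 0 := by exact_mod_cast Hoff x v h
        linarith [hstate x]
    have hcard' : (insert v S)ᶜ.card = k := by
      rw [Finset.compl_insert, Finset.card_erase_of_mem hvF, hcard]; omega
    obtain ⟨l', hnd', htf', hpre'⟩ := ih (insert v S) hcard' hstate'
    have hvl' : v ∉ l' := by
      rw [← List.mem_toFinset, htf', Finset.compl_insert]
      exact fun h => (Finset.mem_erase.mp h).1 rfl
    refine ⟨v :: l', List.nodup_cons.mpr ⟨hvl', hnd'⟩, ?_, ?_⟩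
    · rw [List.toFinset_cons, htf', Finset.compl_insert, Finset.insert_erase hvF]
    · intro t ht x
      cases t with
      | zero => simpa using hstate x
      | succ s =>
        have hs : s ≤ l'.length := by simpa [List.length_cons] using ht
        have h1 := hpre' s hs x
        rw [List.take_succ_cons, List.toFinset_cons]
        have : S ∪ insert v (l'.take s).toFinset = insert v S ∪ (l'.take s).toFinset := by
          rw [Finset.union_insert, Finset.insert_union]
        rw [this]
        exact h1

lemma cfLegal_trans {n : ℕ} (L M : Matrix (Fin n) (Fin n) ℤ) {a b c : Fin n → ℤ}
    (h1 : cfLegal L M a b) (h2 : cfLegal L M b c) : cfLegal L M a c := by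
  obtain ⟨l1, hp1, he1⟩ := h1
  obtain ⟨l2, hp2, he2⟩ := h2
  have hsplit : ∀ s ≤ l2.length,
      a - L.mulVec (fun i => (((l1 ++ l2.take s).count i : ℕ) : ℤ))
      = b - L.mulVec (fun i => (((l2.take s).count i : ℕ) : ℤ)) := by
    intro s _
    rw [he1]
    have hadd : (fun i => (((l1 ++ l2.take s).count i : ℕ) : ℤ))
        = (fun i => ((l1.count i : ℕ) : ℤ)) + fun i => (((l2.take s).count i : ℕ) : ℤ) := by
      funext i
      simp [List.count_append]
    rw [hadd, Matrix.mulVec_add, sub_add_eq_sub_sub]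
  refine ⟨l1 ++ l2, ?_, ?_⟩
  · intro t ht
    rw [List.take_append]
    by_cases hle : t ≤ l1.length
    · rw [Nat.sub_eq_zero_of_le hle, List.take_zero, List.append_nil]
      exact hp1 t hle
    · push_neg at hle
      rw [List.take_of_length_le (le_of_lt hle)]
      have hs : t - l1.length ≤ l2.length := by
        rw [List.length_append] at ht; omega
      rw [hsplit _ hs]
      exact hp2 _ hs
  · rw [he2, show l1 ++ l2 = l1 ++ l2.take l2.length by rw [List.take_length],
      hsplit l2.length le_rfl, List.take_length]

lemma cfLegal_shift {n : ℕ} (L M : Matrix (Fin n) (Fin n) ℤ) {a b : Fin n → ℤ} (v : Fin n → ℤ)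
    (hmono : ∀ x, cfValid L M x → cfValid L M (x + v))
    (h : cfLegal L M a b) : cfLegal L M (a + v) (b + v) := by
  obtain ⟨l, hp, he⟩ := h
  refine ⟨l, fun t ht => ?_, ?_⟩
  · have h1 := hmono _ (hp t ht)
    rwa [sub_add_eq_add_sub] at h1
  · rw [he, sub_add_eq_add_sub]

lemma cardAdj {n : ℕ} (G : SimpleGraph (Fin (n + 1))) [DecidableRel G.Adj]
    (huniv : ∀ i : Fin n, G.Adj i.castSucc (Fin.last n))
    (m : ℕ) (hdeg : ∀ i : Fin n, G.degree i.castSucc = m) (i : Fin n) :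
    (Finset.univ.filter (fun j : Fin n => G.Adj i.castSucc j.castSucc)).card + 1 = m := by
  have himg : (Finset.univ.filter (fun j : Fin n => G.Adj i.castSucc j.castSucc)).image
      Fin.castSucc = (G.neighborFinset i.castSucc).erase (Fin.last n) := by
    ext x
    simp only [Finset.mem_image, Finset.mem_filter, Finset.mem_univ, true_and,
      Finset.mem_erase, SimpleGraph.mem_neighborFinset]
    constructor
    · rintro ⟨j, hj, rfl⟩
      exact ⟨(Fin.castSucc_lt_last j).ne, hj⟩
    · rintro ⟨hx, hadj⟩
      obtain ⟨j, rfl⟩ := Fin.exists_castSucc_eq.mpr hx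
      exact ⟨j, hadj, rfl⟩
  have hmem : Fin.last n ∈ G.neighborFinset i.castSucc := by
    rw [SimpleGraph.mem_neighborFinset]; exact huniv i
  have hcard := Finset.card_image_of_injective
    (Finset.univ.filter (fun j : Fin n => G.Adj i.castSucc j.castSucc))
    (Fin.castSucc_injective n)
  rw [himg, Finset.card_erase_of_mem hmem, SimpleGraph.card_neighborFinset_eq_degree,
    hdeg i] at hcard
  have hmpos : 0 < m := by
    have := Finset.card_pos.mpr ⟨Fin.last n, hmem⟩
    rwa [SimpleGraph.card_neighborFinset_eq_degree, hdeg i] at this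
  omega

lemma rowsum_M {n : ℕ} (G : SimpleGraph (Fin (n + 1))) [DecidableRel G.Adj]
    (huniv : ∀ i : Fin n, G.Adj i.castSucc (Fin.last n))
    (m : ℕ) (hdeg : ∀ i : Fin n, G.degree i.castSucc = m)
    (M : Matrix (Fin n) (Fin n) ℤ)
    (hM : ∀ i j : Fin n, M i j =
      if i = j then (G.degree i.castSucc : ℤ)
      else if G.Adj i.castSucc j.castSucc then -1 else 0) (i : Fin n) :
    ∑ j, M i j = 1 := by
  have h1 : (∑ j, M i j) = M i i + ∑ j ∈ Finset.univ.erase i, M i j :=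
    (Finset.add_sum_erase _ (fun j => M i j) (Finset.mem_univ i)).symm
  have hdiag : M i i = (m : ℤ) := by rw [hM i i, if_pos rfl, hdeg i]
  have h2 : ∑ j ∈ Finset.univ.erase i, M i j
      = -((Finset.univ.filter (fun j : Fin n => G.Adj i.castSucc j.castSucc)).card : ℤ) := by
    have hcongr : ∀ j ∈ Finset.univ.erase i, M i j
        = if G.Adj i.castSucc j.castSucc then (-1 : ℤ) else 0 := by
      intro j hj
      rw [hM i j, if_neg (Ne.symm (Finset.mem_erase.mp hj).1)]
    rw [Finset.sum_congr rfl hcongr, Finset.sum_ite, Finset.sum_const, Finset.sum_const_zero,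
      add_zero]
    have hfe : (Finset.univ.erase i).filter (fun j : Fin n => G.Adj i.castSucc j.castSucc)
        = Finset.univ.filter (fun j : Fin n => G.Adj i.castSucc j.castSucc) := by
      ext j
      simp only [Finset.mem_filter, Finset.mem_erase, Finset.mem_univ, and_true, true_and]
      constructor
      · rintro ⟨_, hadj⟩; exact hadj
      · intro hadj
        exact ⟨fun hj => by subst hj; exact G.irrefl hadj, hadj⟩
    rw [hfe]
    simp
  have hc := cardAdj G huniv m hdeg i
  rw [h1, hdiag, h2]
  omega

lemma rowsum_N {n : ℕ} (N : Matrix (Fin n) (Fin n) ℤ)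
    (hNval : ∀ i j, N i j = 0 ∨ N i j = 2) (mneg : ℕ)
    (hNrow : ∀ i, (Finset.univ.filter (fun j => N i j = 2)).card = mneg) (i : Fin n) :
    ∑ j, N i j = 2 * (mneg : ℤ) := by
  have hsplit := Finset.sum_filter_add_sum_filter_not Finset.univ
    (fun j => N i j = 2) (fun j => N i j)
  have h2 : ∑ j ∈ Finset.univ.filter (fun j => N i j = 2), N i j = 2 * (mneg : ℤ) := by
    rw [Finset.sum_congr rfl (fun j hj => (Finset.mem_filter.mp hj).2), Finset.sum_const,
      hNrow i]
    ring
  have h0 : ∑ j ∈ Finset.univ.filter (fun j => ¬ N i j = 2), N i j = 0 := by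
    rw [Finset.sum_congr rfl (fun j hj => ?_), Finset.sum_const_zero]
    rcases hNval i j with h | h
    · exact h
    · exact absurd h (Finset.mem_filter.mp hj).2
  rw [← hsplit, h2, h0, add_zero]

/-- Corollary `SpecialSinkFire`: let `G` be connected with universal sink
`q = Fin.last n` such that `G` minus the sink is connected and every nonsink vertex has
degree `m`; let `M` be the reduced Laplacian and `L = M + N` the reduced signed
Laplacian (invertible over ℚ), where each row of `N` has exactly `mneg` entries equal to
`2` (i.e. `G_φ` is signed-regular with `mneg` negative edges at each nonsink vertex).
Then a valid configuration `c` is critical if and only if `c` is stable and there is a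
legal firing sequence from `c + (2·mneg + 1)·𝟙` to `c`. -/
theorem stmt16 (n : ℕ) (hn : 1 ≤ n)
    (G : SimpleGraph (Fin (n + 1))) [DecidableRel G.Adj] (hconn : G.Connected)
    (hconn' : (G.comap (fun i : Fin n => i.castSucc)).Connected)
    (huniv : ∀ i : Fin n, G.Adj i.castSucc (Fin.last n))
    (m : ℕ) (hdeg : ∀ i : Fin n, G.degree i.castSucc = m)
    (M N : Matrix (Fin n) (Fin n) ℤ)
    (hM : ∀ i j : Fin n, M i j =
      if i = j then (G.degree i.castSucc : ℤ)
      else if G.Adj i.castSucc j.castSucc then -1 else 0)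
    (hNsymm : ∀ i j, N i j = N j i)
    (hNdiag : ∀ i, N i i = 0)
    (hNval : ∀ i j, N i j = 0 ∨ N i j = 2)
    (hNsupp : ∀ i j, N i j ≠ 0 → M i j = -1)
    (mneg : ℕ)
    (hNrow : ∀ i, (Finset.univ.filter (fun j => N i j = 2)).card = mneg)
    (L : Matrix (Fin n) (Fin n) ℤ) (hLdef : L = M + N)
    (hLinv : IsUnit (L.map (Int.cast : ℤ → ℚ))) :
    ∀ c : Fin n → ℤ, cfValid L M c →
      (cfCritical L M c ↔
        (cfStable L M c ∧
          cfLegal L M (c + fun _ => (2 * (mneg : ℤ) + 1)) c)) := by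
  intro c hc
  -- basic facts about rows of M and L
  have Hrow : ∀ i, ∑ j, M i j = 1 := rowsum_M G huniv m hdeg M hM
  have HrowQ : ∀ i, ∑ j, (M i j : ℚ) = 1 := by
    intro i
    exact_mod_cast congrArg (Int.cast : ℤ → ℚ) (Hrow i)
  have Hdiag : ∀ i, M i i = (m : ℤ) := fun i => by rw [hM i i, if_pos rfl, hdeg i]
  have Hoff : ∀ i j : Fin n, i ≠ j → M i j ≤ 0 := by
    intro i j hij
    rw [hM i j, if_neg hij]
    split <;> omega
  have HLrow : ∀ i, ∑ j, L i j = 2 * (mneg : ℤ) + 1 := by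
    intro i
    rw [hLdef]
    simp only [Matrix.add_apply]
    rw [Finset.sum_add_distrib, Hrow i, rowsum_N N hNval mneg hNrow i]
    ring
  have hLone : L.mulVec (fun _ => (1 : ℤ)) = fun _ => 2 * (mneg : ℤ) + 1 := by
    funext i
    simp only [Matrix.mulVec, dotProduct, mul_one]
    exact HLrow i
  -- validity is preserved by adding a nonnegative uniform sink-firing
  have hshift : ∀ (K : ℤ), 0 ≤ K → ∀ x, cfValid L M x →
      cfValid L M (x + L.mulVec (fun _ => K)) := by
    intro K hK x hx
    have heq : x + L.mulVec (fun _ => K) = x - L.mulVec (fun _ => -K) := by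
      have h1 : (fun _ => -K) = -(fun _ => K : Fin n → ℤ) := rfl
      rw [h1, Matrix.mulVec_neg, sub_neg_eq_add]
    rw [heq, cfValid_iff]
    intro i
    rw [Yq_sub_apply L M hLinv]
    have hs : (∑ j, (M i j : ℚ) * (((-K : ℤ)) : ℚ)) = -(K : ℚ) := by
      rw [← Finset.sum_mul, HrowQ i, one_mul]
      push_cast
      ring
    have h2 := (cfValid_iff L M x).mp hx i
    have h3 : (0 : ℚ) ≤ (K : ℚ) := by exact_mod_cast hK
    rw [hs]
    linarith [h2]
  constructor
  · -- critical → stable ∧ legal from c + (2mneg+1)𝟙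
    rintro ⟨hval, hstab, d, hdval, hdfire, l, hlpre, hlend⟩
    refine ⟨hstab, ?_⟩
    -- all sites fireable at d
    have hwfire : ∀ v i : Fin n, 0 ≤ Yq L M d v - (M v i : ℚ) := by
      intro v i
      have h1 := (cfValid_iff L M _).mp (hdfire i) v
      rw [Yq_sub_apply L M hLinv] at h1
      simp only [Pi.single_apply, Int.cast_ite, Int.cast_one, Int.cast_zero, mul_ite,
        mul_one, mul_zero, Finset.sum_ite_eq', Finset.mem_univ, if_true] at h1
      exact h1
    -- no forbidden subconfiguration at d
    have hnfd : NoForb M (Yq L M d) := by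
      intro F hF
      obtain ⟨v, hvF⟩ := hF
      refine ⟨v, hvF, ?_⟩
      have h1 : (∑ x ∈ F.erase v, -(M v x : ℚ)) ≤ ∑ x ∈ Finset.univ.erase v, -(M v x : ℚ) := by
        apply Finset.sum_le_sum_of_subset_of_nonneg
        · exact Finset.erase_subset_erase v (Finset.subset_univ F)
        · intro x hx _
          have hx0 : M v x ≤ 0 := Hoff v x (Ne.symm (Finset.mem_erase.mp hx).1)
          have : (M v x : ℚ) ≤ 0 := by exact_mod_cast hx0
          linarith
      have h2 : (∑ x ∈ Finset.univ.erase v, -(M v x : ℚ)) = (m : ℚ) - 1 := by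
        rw [Finset.sum_neg_distrib]
        have hs : (M v v : ℚ) + ∑ x ∈ Finset.univ.erase v, (M v x : ℚ) = 1 := by
          rw [Finset.add_sum_erase Finset.univ (fun x => (M v x : ℚ)) (Finset.mem_univ v)]
          exact HrowQ v
        have hd : (M v v : ℚ) = m := by exact_mod_cast Hdiag v
        linarith
      have h3 : (m : ℚ) ≤ Yq L M d v := by
        have h4 := hwfire v v
        have hd : (M v v : ℚ) = m := by exact_mod_cast Hdiag v
        linarith
      linarith
    -- transport no-forbidden along the legal sequence to c
    have hchainpre : ∀ t ≤ l.length, ∀ v,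
        0 ≤ Yq L M d v - ∑ j, (M v j : ℚ) * ((l.take t).count j : ℚ) := by
      intro t ht v
      have h1 := (cfValid_iff L M _).mp (hlpre t ht) v
      rw [Yq_sub_apply L M hLinv] at h1
      push_cast at h1 ⊢
      exact h1
    have hqe : Yq L M c = fun v => Yq L M d v - ∑ j, (M v j : ℚ) * ((l.count j : ℕ) : ℚ) := by
      funext v
      rw [hlend, Yq_sub_apply L M hLinv]
      push_cast
      ring
    have hnfq : NoForb M (Yq L M c) := by
      rw [hqe]
      exact noForb_chain Hoff l (Yq L M d) hchainpre hnfd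
    -- burn: construct a legal permutation firing from c + (2mneg+1)𝟙
    obtain ⟨l₂, hnd, htf, hpre₂⟩ := burn_aux Hoff HrowQ (Yq L M c) hnfq
      ((∅ : Finset (Fin n))ᶜ.card) ∅ rfl
      (by
        intro v
        simp only [Finset.sum_empty, sub_zero]
        have := (cfValid_iff L M c).mp hc v
        linarith)
    -- indicator sums for nodup lists
    have hcntind : ∀ (l3 : List (Fin n)), l3.Nodup → ∀ v,
        (∑ j, (M v j : ℚ) * ((l3.count j : ℕ) : ℚ)) = ∑ u ∈ l3.toFinset, (M v u : ℚ) := by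
      intro l3 hnd3 v
      have h1 : ∀ j : Fin n, ((l3.count j : ℕ) : ℚ) = if j ∈ l3.toFinset then 1 else 0 := by
        intro j
        by_cases hj : j ∈ l3.toFinset
        · rw [List.count_eq_one_of_mem hnd3 (List.mem_toFinset.mp hj), if_pos hj]
          norm_num
        · rw [List.count_eq_zero_of_not_mem (fun h => hj (List.mem_toFinset.mpr h)), if_neg hj]
          norm_num
      rw [Finset.sum_congr rfl fun j _ => by rw [h1 j]]
      calc (∑ j, (M v j : ℚ) * (if j ∈ l3.toFinset then (1:ℚ) else 0))
          = ∑ j, (if j ∈ l3.toFinset then (M v j : ℚ) else 0) :=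
            Finset.sum_congr rfl fun j _ => by split <;> simp
        _ = ∑ u ∈ Finset.univ ∩ l3.toFinset, (M v u : ℚ) := Finset.sum_ite_mem _ _ _
        _ = ∑ u ∈ l3.toFinset, (M v u : ℚ) := by rw [Finset.univ_inter]
    refine ⟨l₂, ?_, ?_⟩
    · intro t ht
      have hconf : c + (fun _ => 2 * (mneg : ℤ) + 1)
            - L.mulVec (fun i => ((l₂.take t).count i : ℤ))
          = c - L.mulVec (fun i => ((l₂.take t).count i : ℤ) - 1) := by
        have h1 : (fun i => ((l₂.take t).count i : ℤ) - 1)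
            = (fun i => ((l₂.take t).count i : ℤ)) - (fun _ => (1 : ℤ)) := rfl
        rw [h1, Matrix.mulVec_sub, hLone]
        abel
      rw [hconf, cfValid_iff]
      intro v
      rw [Yq_sub_apply L M hLinv]
      have hzq : ∀ j : Fin n,
          ((((l₂.take t).count j : ℤ) - 1 : ℤ) : ℚ) = (((l₂.take t).count j : ℕ) : ℚ) - 1 := by
        intro j
        push_cast
        ring
      have hsplit : (∑ j, (M v j : ℚ) * ((((l₂.take t).count j : ℤ) - 1 : ℤ) : ℚ))
          = (∑ j, (M v j : ℚ) * (((l₂.take t).count j : ℕ) : ℚ)) - 1 := by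
        rw [Finset.sum_congr rfl fun j _ => by rw [hzq j, mul_sub, mul_one]]
        rw [Finset.sum_sub_distrib, HrowQ v]
      rw [hsplit, hcntind _ (hnd.sublist (List.take_sublist t l₂)) v]
      have h1 := hpre₂ t ht v
      rw [Finset.empty_union] at h1
      linarith
    · have hone : (fun i => ((l₂.count i : ℕ) : ℤ)) = fun _ => (1 : ℤ) := by
        funext j
        have hj : j ∈ l₂ := by
          rw [← List.mem_toFinset, htf]
          simp
        rw [List.count_eq_one_of_mem hnd hj]
        norm_num
      rw [hone, hLone, add_sub_cancel_right]
  · -- stable ∧ legal-from-sink-firing → critical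
    rintro ⟨hstab, hleg⟩
    refine ⟨hc, hstab, c + L.mulVec (fun _ => ((m + 1 : ℕ) : ℤ)), ?_, ?_, ?_⟩
    · exact hshift _ (by positivity) c hc
    · intro i
      have hconf : c + L.mulVec (fun _ => ((m + 1 : ℕ) : ℤ)) - L.mulVec (Pi.single i 1)
          = c - L.mulVec (fun j => (Pi.single i 1 : Fin n → ℤ) j - ((m + 1 : ℕ) : ℤ)) := by
        have h1 : (fun j => (Pi.single i 1 : Fin n → ℤ) j - ((m + 1 : ℕ) : ℤ))
            = (Pi.single i 1 : Fin n → ℤ) - (fun _ => ((m + 1 : ℕ) : ℤ)) := rfl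
        rw [h1, Matrix.mulVec_sub]
        abel
      rw [hconf, cfValid_iff]
      intro v
      rw [Yq_sub_apply L M hLinv]
      have hsum : (∑ j, (M v j : ℚ)
            * (((Pi.single i 1 : Fin n → ℤ) j - ((m + 1 : ℕ) : ℤ) : ℤ) : ℚ))
          = (M v i : ℚ) - ((m : ℚ) + 1) := by
        have h1 : ∀ j : Fin n, (((Pi.single i 1 : Fin n → ℤ) j - ((m + 1 : ℕ) : ℤ) : ℤ) : ℚ)
            = (if j = i then (1 : ℚ) else 0) - ((m : ℚ) + 1) := by
          intro j
          simp only [Pi.single_apply]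
          push_cast
          split <;> ring
        rw [Finset.sum_congr rfl fun j _ => by rw [h1 j, mul_sub]]
        rw [Finset.sum_sub_distrib]
        rw [show (∑ j, (M v j : ℚ) * (if j = i then (1 : ℚ) else 0)) = (M v i : ℚ) by
          simp [mul_ite]]
        rw [← Finset.sum_mul, HrowQ v, one_mul]
      rw [hsum]
      have hMvi : (M v i : ℚ) ≤ (m : ℚ) := by
        rcases eq_or_ne v i with h | h
        · subst h
          exact_mod_cast le_of_eq (Hdiag v)
        · have h0 : M v i ≤ 0 := Hoff v i h
          have h0q : (M v i : ℚ) ≤ 0 := by exact_mod_cast h0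
          have hmq : (0:ℚ) ≤ (m:ℚ) := by positivity
          linarith
      have h2 := (cfValid_iff L M c).mp hc v
      linarith
    · -- legal sequence from c + (m+1)·L𝟙 down to c
      have hKlegal : ∀ K : ℕ, cfLegal L M (c + L.mulVec (fun _ => (K : ℤ))) c := by
        intro K
        induction K with
        | zero =>
          refine ⟨[], ?_, ?_⟩
          · intro t ht
            have ht0 : t = 0 := Nat.le_zero.mp ht
            subst ht0
            have h0 : c + L.mulVec (fun _ => ((0 : ℕ) : ℤ))
                - L.mulVec (fun i => ((([] : List (Fin n)).take 0).count i : ℤ)) = c := by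
              have e1 : (fun _ => ((0 : ℕ) : ℤ)) = (0 : Fin n → ℤ) := by funext; simp
              have e2 : (fun i => ((([] : List (Fin n)).take 0).count i : ℤ))
                  = (0 : Fin n → ℤ) := by funext; simp
              rw [e1, e2, Matrix.mulVec_zero, add_zero, sub_zero]
            rw [h0]
            exact hc
          · have e1 : (fun _ => ((0 : ℕ) : ℤ)) = (0 : Fin n → ℤ) := by funext; simp
            have e2 : (fun i => ((([] : List (Fin n)).count i : ℕ) : ℤ))
                = (0 : Fin n → ℤ) := by funext; simp
            rw [e1, e2, Matrix.mulVec_zero, add_zero, sub_zero]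
        | succ K ihK =>
          have hmono' : ∀ x, cfValid L M x → cfValid L M (x + L.mulVec (fun _ => (K : ℤ))) :=
            fun x hx => hshift (K : ℤ) (by positivity) x hx
          have hstep := cfLegal_shift L M (L.mulVec (fun _ => (K : ℤ))) hmono' hleg
          have he : (c + fun _ => 2 * (mneg : ℤ) + 1) + L.mulVec (fun _ => (K : ℤ))
              = c + L.mulVec (fun _ => ((K + 1 : ℕ) : ℤ)) := by
            have h1 : L.mulVec (fun _ => ((K + 1 : ℕ) : ℤ))
                = L.mulVec (fun _ => (1 : ℤ)) + L.mulVec (fun _ => (K : ℤ)) := by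
              have h2 : (fun _ : Fin n => ((K + 1 : ℕ) : ℤ))
                  = (fun _ => (1 : ℤ)) + (fun _ => (K : ℤ)) := by
                funext j
                simp [Pi.add_apply]
                ring
              rw [h2, Matrix.mulVec_add]
            rw [h1, hLone, add_assoc]
          rw [he] at hstep
          exact cfLegal_trans L M hstep ihK
      exact hKlegal (m + 1)
end

section
/- Let G be a finite connected simple graph with vertices v₁,…,v_n and universal sink q (q adjacent to every v_i) such that G minus the sink is connected and each v_i has degree m in G. Let M be the reduced Laplacian of G, and let L = M + N where N is a symmetric integer matrix, zero on the diagonal, with entries in {0,2} supported on positions where M_{ij} = −1, such that each row of N contains exactly m₋ entries equal to 2; assume L is invertible over ℚ. Set m′ = m·(2m₋ + 1) − 1. Then (1) the configuration m′·𝟙 (𝟙 the all-ones vector) lies in S⁺ and is critical for the chip-firing pair (L, M); and (2) if moreover every off-diagonal entry of L is ≥ 0 (i.e. all edges not incident to the sink are negative, so m₋ = m − 1), then every stable configuration c ∈ S⁺ satisfies c_i ≤ m′ for every index i. -/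
open Matrix

/-- Proposition `MaxCriticalConfig`: in the setting of a signed-regular signed graph
with universal sink (each nonsink vertex of degree `m`, with `mneg` negative edges),
setting `m' = m·(2·mneg + 1) - 1`, the constant configuration `m'·𝟙` is valid and
critical; and if moreover every off-diagonal entry of `L` is nonnegative (the
all-negative case `G_φ = -G`), then every valid stable configuration `c` satisfies
`c i ≤ m'` for every `i`. -/
theorem stmt17 (n : ℕ) (hn : 1 ≤ n)
    (G : SimpleGraph (Fin (n + 1))) [DecidableRel G.Adj] (hconn : G.Connected)
    (hconn' : (G.comap (fun i : Fin n => i.castSucc)).Connected)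
    (huniv : ∀ i : Fin n, G.Adj i.castSucc (Fin.last n))
    (m : ℕ) (hdeg : ∀ i : Fin n, G.degree i.castSucc = m)
    (M N : Matrix (Fin n) (Fin n) ℤ)
    (hM : ∀ i j : Fin n, M i j =
      if i = j then (G.degree i.castSucc : ℤ)
      else if G.Adj i.castSucc j.castSucc then -1 else 0)
    (hNsymm : ∀ i j, N i j = N j i)
    (hNdiag : ∀ i, N i i = 0)
    (hNval : ∀ i j, N i j = 0 ∨ N i j = 2)
    (hNsupp : ∀ i j, N i j ≠ 0 → M i j = -1)
    (mneg : ℕ)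
    (hNrow : ∀ i, (Finset.univ.filter (fun j => N i j = 2)).card = mneg)
    (L : Matrix (Fin n) (Fin n) ℤ) (hLdef : L = M + N)
    (hLinv : IsUnit (L.map (Int.cast : ℤ → ℚ)))
    (m' : ℤ) (hm' : m' = (m : ℤ) * (2 * (mneg : ℤ) + 1) - 1) :
    (cfValid L M (fun _ => m') ∧ cfCritical L M (fun _ => m')) ∧
    ((∀ i j, i ≠ j → 0 ≤ L i j) →
      ∀ c : Fin n → ℤ, cfValid L M c → cfStable L M c → ∀ i, c i ≤ m') := by
  classical
  -- basic positivity facts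
  have hm1 : 1 ≤ m := by
    have h := huniv ⟨0, hn⟩
    have hd : 0 < G.degree (⟨0, hn⟩ : Fin n).castSucc :=
      (SimpleGraph.degree_pos_iff_exists_adj _ _).mpr ⟨Fin.last n, h⟩
    rw [hdeg] at hd
    exact hd
  have Mdiag : ∀ i : Fin n, M i i = (m : ℤ) := by
    intro i; rw [hM i i, if_pos rfl, hdeg i]
  have Madj : ∀ i j : Fin n, G.Adj i.castSucc j.castSucc → M i j = -1 := by
    intro i j h
    have hij : i ≠ j := by
      rintro rfl; exact G.loopless.irrefl _ h
    rw [hM i j, if_neg hij, if_pos h]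
  have MnotAdj : ∀ i j : Fin n, i ≠ j → ¬ G.Adj i.castSucc j.castSucc → M i j = 0 := by
    intro i j hij h
    rw [hM i j, if_neg hij, if_neg h]
  have Mnonpos : ∀ i j : Fin n, i ≠ j → M i j ≤ 0 := by
    intro i j hij
    by_cases h : G.Adj i.castSucc j.castSucc
    · rw [Madj i j h]; norm_num
    · rw [MnotAdj i j hij h]
  -- cardinality of the nonsink neighbourhood
  have cardA : ∀ i : Fin n,
      (Finset.univ.filter fun j : Fin n => G.Adj i.castSucc j.castSucc).card = m - 1 := by
    intro i
    have himg : (Finset.univ.filter fun j : Fin n => G.Adj i.castSucc j.castSucc).image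
        Fin.castSucc = (G.neighborFinset i.castSucc).erase (Fin.last n) := by
      ext x
      simp only [Finset.mem_image, Finset.mem_filter, Finset.mem_univ, true_and,
        Finset.mem_erase, SimpleGraph.mem_neighborFinset]
      constructor
      · rintro ⟨j, hj, rfl⟩
        exact ⟨(Fin.castSucc_lt_last j).ne, hj⟩
      · rintro ⟨hne, hadj⟩
        exact ⟨x.castPred hne, by simpa using hadj, by simp⟩
    have h1 : (Finset.univ.filter fun j : Fin n => G.Adj i.castSucc j.castSucc).card
        = ((G.neighborFinset i.castSucc).erase (Fin.last n)).card := by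
      rw [← himg, Finset.card_image_of_injective _ (Fin.castSucc_injective n)]
    rw [h1, Finset.card_erase_of_mem (by simp [SimpleGraph.mem_neighborFinset, huniv i]),
      SimpleGraph.card_neighborFinset_eq_degree, hdeg i]
  have cardAq : ∀ i : Fin n,
      (((Finset.univ.filter fun j : Fin n => G.Adj i.castSucc j.castSucc).card : ℕ) : ℚ)
        = (m : ℚ) - 1 := by
    intro i
    rw [cardA i, Nat.cast_sub hm1, Nat.cast_one]
  -- row sums
  have rowM : ∀ i : Fin n, ∑ j, M i j = 1 := by
    intro i
    have hfe : (Finset.univ.erase i).filter (fun j => G.Adj i.castSucc j.castSucc)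
        = Finset.univ.filter (fun j : Fin n => G.Adj i.castSucc j.castSucc) := by
      ext j
      simp only [Finset.mem_filter, Finset.mem_erase, Finset.mem_univ, true_and, and_true]
      constructor
      · tauto
      · intro h
        refine ⟨fun hji => ?_, h⟩
        subst hji
        exact G.loopless.irrefl _ h
    have hoff : ∑ j ∈ Finset.univ.erase i, M i j = -((m : ℤ) - 1) := by
      have h2 : ∑ j ∈ Finset.univ.erase i, M i j
          = ∑ j ∈ (Finset.univ.erase i).filter (fun j => G.Adj i.castSucc j.castSucc),
              (-1 : ℤ) := by
        rw [Finset.sum_filter]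
        refine Finset.sum_congr rfl fun j hj => ?_
        have hij : i ≠ j := (Finset.ne_of_mem_erase hj).symm
        by_cases h : G.Adj i.castSucc j.castSucc
        · rw [Madj i j h, if_pos h]
        · rw [MnotAdj i j hij h, if_neg h]
      rw [h2, hfe, Finset.sum_const, cardA i, nsmul_eq_mul, Nat.cast_sub hm1]
      push_cast
      ring
    have hsplit : M i i + ∑ j ∈ Finset.univ.erase i, M i j = ∑ j, M i j :=
      Finset.add_sum_erase Finset.univ (fun j => M i j) (Finset.mem_univ i)
    rw [← hsplit, hoff, Mdiag i]
    ring
  have rowN : ∀ i : Fin n, ∑ j, N i j = 2 * (mneg : ℤ) := by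
    intro i
    have h1 : ∑ j ∈ Finset.univ.filter (fun j => N i j = 2), N i j = ∑ j, N i j :=
      Finset.sum_filter_of_ne (fun x _ hx => (hNval i x).resolve_left hx)
    rw [← h1, Finset.sum_congr rfl (fun j hj => (Finset.mem_filter.mp hj).2),
      Finset.sum_const, hNrow i, nsmul_eq_mul]
    ring
  have rowL : ∀ i : Fin n, ∑ j, L i j = 2 * (mneg : ℤ) + 1 := by
    intro i
    have : ∑ j, L i j = (∑ j, M i j) + ∑ j, N i j := by
      rw [← Finset.sum_add_distrib]
      exact Finset.sum_congr rfl fun j _ => by rw [hLdef, Matrix.add_apply]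
    rw [this, rowM i, rowN i]
    ring
  have hq1pos : (0 : ℚ) < 2 * (mneg : ℚ) + 1 := by positivity
  have hq1one : (1 : ℚ) ≤ 2 * (mneg : ℚ) + 1 := by
    have : (0 : ℚ) ≤ 2 * (mneg : ℚ) := by positivity
    linarith
  have rowLq : ∀ i : Fin n, ∑ j, ((L i j : ℤ) : ℚ) = 2 * (mneg : ℚ) + 1 := by
    intro i
    have h := rowL i
    have : ((∑ j, L i j : ℤ) : ℚ) = 2 * (mneg : ℚ) + 1 := by rw [h]; push_cast; ring
    rw [← this]
    push_cast
    rfl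
  -- matrix algebra facts over ℚ
  have hdet : IsUnit (L.map (Int.cast : ℤ → ℚ)).det :=
    (Matrix.isUnit_iff_isUnit_det _).mp hLinv
  have hkey : ∀ w : Fin n → ℚ,
      ((M.map (Int.cast : ℤ → ℚ)) * (L.map (Int.cast : ℤ → ℚ))⁻¹).mulVec
        ((L.map (Int.cast : ℤ → ℚ)).mulVec w) = (M.map (Int.cast : ℤ → ℚ)).mulVec w := by
    intro w
    have h : (M.map (Int.cast : ℤ → ℚ)) * (L.map (Int.cast : ℤ → ℚ))⁻¹
        * (L.map (Int.cast : ℤ → ℚ)) = M.map (Int.cast : ℤ → ℚ) := by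
      rw [Matrix.mul_assoc, Matrix.nonsing_inv_mul _ hdet, Matrix.mul_one]
    rw [Matrix.mulVec_mulVec, h]
  have entryM : ∀ (j : Fin n) (w : Fin n → ℚ),
      (M.map (Int.cast : ℤ → ℚ)).mulVec w j
        = (m : ℚ) * w j
          - ∑ k ∈ Finset.univ.filter (fun k : Fin n => G.Adj j.castSucc k.castSucc), w k := by
    intro j w
    have hterm : ∀ k : Fin n, ((M j k : ℤ) : ℚ) * w k
        = (if k = j then (m : ℚ) * w j else 0)
          + (if G.Adj j.castSucc k.castSucc then -(w k) else 0) := by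
      intro k
      rcases eq_or_ne k j with rfl | hkj
      · rw [Mdiag k]
        simp [G.loopless.irrefl k.castSucc]
      · by_cases hadj : G.Adj j.castSucc k.castSucc
        · rw [Madj j k hadj, if_neg hkj, if_pos hadj]
          push_cast
          ring
        · rw [MnotAdj j k (Ne.symm hkj) hadj, if_neg hkj, if_neg hadj]
          push_cast
          ring
    have h0 : (M.map (Int.cast : ℤ → ℚ)).mulVec w j = ∑ k, ((M j k : ℤ) : ℚ) * w k := by
      simp [Matrix.mulVec, dotProduct, Matrix.map_apply]
    rw [h0, Finset.sum_congr rfl fun k _ => hterm k, Finset.sum_add_distrib]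
    have e1 : ∑ k : Fin n, (if k = j then (m : ℚ) * w j else 0) = (m : ℚ) * w j := by simp
    have e2 : ∑ k : Fin n, (if G.Adj j.castSucc k.castSucc then -(w k) else 0)
        = - ∑ k ∈ Finset.univ.filter (fun k : Fin n => G.Adj j.castSucc k.castSucc), w k := by
      rw [← Finset.sum_filter, Finset.sum_neg_distrib]
    rw [e1, e2]
    ring
  have castVec : ∀ v : Fin n → ℤ,
      (fun i => ((L.mulVec v i : ℤ) : ℚ))
        = (L.map (Int.cast : ℤ → ℚ)).mulVec (fun i => ((v i : ℤ) : ℚ)) := by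
    intro v
    funext i
    simp only [Matrix.mulVec, dotProduct, Matrix.map_apply]
    push_cast
    rfl
  have constRep : ∀ b : ℚ,
      (L.map (Int.cast : ℤ → ℚ)).mulVec (fun _ => b) = fun _ => (2 * (mneg : ℚ) + 1) * b := by
    intro b
    funext i
    simp only [Matrix.mulVec, dotProduct, Matrix.map_apply]
    rw [← Finset.sum_mul, rowLq i]
  -- generic representation: a constant integer vector minus L·u
  have rep : ∀ (t : ℤ) (u : Fin n → ℤ),
      (fun k => ((((fun _ => t) - L.mulVec u) : Fin n → ℤ) k : ℚ))
        = (L.map (Int.cast : ℤ → ℚ)).mulVec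
            ((fun _ => (t : ℚ) / (2 * (mneg : ℚ) + 1)) - fun k => ((u k : ℤ) : ℚ)) := by
    intro t u
    rw [Matrix.mulVec_sub, constRep ((t : ℚ) / (2 * (mneg : ℚ) + 1)), ← castVec u]
    funext k
    simp only [Pi.sub_apply]
    rw [mul_div_cancel₀ _ (ne_of_gt hq1pos)]
    push_cast
    rfl
  have repConst : ∀ t : ℤ,
      (fun k => (((fun _ => t) : Fin n → ℤ) k : ℚ))
        = (L.map (Int.cast : ℤ → ℚ)).mulVec (fun _ => (t : ℚ) / (2 * (mneg : ℚ) + 1)) := by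
    intro t
    rw [constRep ((t : ℚ) / (2 * (mneg : ℚ) + 1))]
    funext k
    rw [mul_div_cancel₀ _ (ne_of_gt hq1pos)]
  -- the master evaluation
  have main : ∀ (v : Fin n → ℤ) (w : Fin n → ℚ),
      ((fun k => ((v k : ℤ) : ℚ)) = (L.map (Int.cast : ℤ → ℚ)).mulVec w) →
      ∀ j : Fin n,
        (((M.map (Int.cast : ℤ → ℚ)) * (L.map (Int.cast : ℤ → ℚ))⁻¹).mulVec
          (fun k => ((v k : ℤ) : ℚ))) j
        = (m : ℚ) * w j
          - ∑ k ∈ Finset.univ.filter (fun k : Fin n => G.Adj j.castSucc k.castSucc), w k := by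
    intro v w h j
    rw [h, hkey w, entryM j w]
  set b : ℚ := (m' : ℚ) / (2 * (mneg : ℚ) + 1) with hbdef
  have hm'q : (m' : ℚ) = (m : ℚ) * (2 * (mneg : ℚ) + 1) - 1 := by
    rw [hm']; push_cast; ring
  have hm'0 : (0 : ℚ) ≤ (m' : ℚ) := by
    rw [hm'q]
    have hmq : (1 : ℚ) ≤ (m : ℚ) := by exact_mod_cast hm1
    nlinarith
  have hb0 : 0 ≤ b := div_nonneg hm'0 (le_of_lt hq1pos)
  have hbm : b = (m : ℚ) - 1 / (2 * (mneg : ℚ) + 1) := by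
    rw [hbdef, hm'q]
    field_simp
  have hinvle : 1 / (2 * (mneg : ℚ) + 1) ≤ 1 := by
    rw [div_le_one hq1pos]; linarith
  have hinvpos : 0 < 1 / (2 * (mneg : ℚ) + 1) := by positivity
  -- the uniform estimate
  have estval : ∀ w : Fin n → ℚ, (∀ k, b ≤ w k) → (∀ k, w k ≤ b + 1) →
      ∀ j : Fin n, 0 ≤ (m : ℚ) * w j
        - ∑ k ∈ Finset.univ.filter (fun k : Fin n => G.Adj j.castSucc k.castSucc), w k := by
    intro w hlo hhi j
    have hs : ∑ k ∈ Finset.univ.filter (fun k : Fin n => G.Adj j.castSucc k.castSucc), w k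
        ≤ ((m : ℚ) - 1) * (b + 1) := by
      calc ∑ k ∈ Finset.univ.filter (fun k : Fin n => G.Adj j.castSucc k.castSucc), w k
          ≤ (Finset.univ.filter (fun k : Fin n => G.Adj j.castSucc k.castSucc)).card • (b + 1) :=
            Finset.sum_le_card_nsmul _ _ _ (fun k _ => hhi k)
        _ = ((m : ℚ) - 1) * (b + 1) := by rw [nsmul_eq_mul, cardAq j]
    have h2 : (m : ℚ) * b ≤ (m : ℚ) * w j :=
      mul_le_mul_of_nonneg_left (hlo j) (by positivity)
    have key0 : (m : ℚ) * b - ((m : ℚ) - 1) * (b + 1) = 1 - 1 / (2 * (mneg : ℚ) + 1) := by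
      rw [hbm]; ring
    linarith
  -- validity of the constant configuration m'·𝟙
  have hval1 : cfValid L M (fun _ => m') := by
    intro i
    rw [main (fun _ => m') (fun _ => b) (repConst m') i]
    have hc : ∀ k : Fin n, ((fun _ => b) : Fin n → ℚ) k ≤ b + 1 := fun k => by norm_num
    exact estval (fun _ => b) (fun k => le_refl b) hc i
  -- stability of m'·𝟙
  have hstab1 : cfStable L M (fun _ => m') := by
    intro i hvalid
    have h := hvalid i
    have hrep := rep m' (Pi.single i 1)
    rw [main _ _ hrep i] at h
    set w : Fin n → ℚ :=
      (fun _ => (m' : ℚ) / (2 * (mneg : ℚ) + 1)) - fun k => (((Pi.single i 1 : Fin n → ℤ) k : ℤ) : ℚ)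
      with hwdef
    have hwi : w i = b - 1 := by
      simp [hwdef, hbdef]
    have hwk : ∀ k ∈ Finset.univ.filter (fun k : Fin n => G.Adj i.castSucc k.castSucc),
        w k = b := by
      intro k hk
      have hadj := (Finset.mem_filter.mp hk).2
      have hki : k ≠ i := by
        rintro rfl; exact G.loopless.irrefl _ hadj
      simp [hwdef, hbdef, Pi.single_eq_of_ne hki]
    rw [Finset.sum_congr rfl hwk, Finset.sum_const, nsmul_eq_mul, cardAq i, hwi] at h
    have : (m : ℚ) * (b - 1) - ((m : ℚ) - 1) * b = -(1 / (2 * (mneg : ℚ) + 1)) := by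
      rw [hbm]; ring
    rw [this] at h
    linarith
  -- reachability of m'·𝟙
  have hreach : cfReachable L M (fun _ => m') := by
    refine ⟨(fun _ => m' + (2 * (mneg : ℤ) + 1)), ?_, ?_, ?_⟩
    · -- d is valid
      intro i
      rw [main _ _ (repConst (m' + (2 * (mneg : ℤ) + 1))) i]
      have hcc : ((m' + (2 * (mneg : ℤ) + 1) : ℤ) : ℚ) / (2 * (mneg : ℚ) + 1) = b + 1 := by
        push_cast
        rw [hbdef]
        field_simp
      rw [hcc]
      exact estval (fun _ => b + 1) (fun k => by norm_num) (fun k => le_refl _) i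
    · -- every site can be fired from d
      intro i i'
      have hrep := rep (m' + (2 * (mneg : ℤ) + 1)) (Pi.single i 1)
      rw [main _ _ hrep i']
      have hcc : ((m' + (2 * (mneg : ℤ) + 1) : ℤ) : ℚ) / (2 * (mneg : ℚ) + 1) = b + 1 := by
        push_cast
        rw [hbdef]
        field_simp
      refine estval _ ?_ ?_ i'
      · intro k
        simp only [Pi.sub_apply, hcc]
        rcases eq_or_ne k i with rfl | hki
        · simp
        · simp [Pi.single_eq_of_ne hki]
      · intro k
        simp only [Pi.sub_apply, hcc]
        rcases eq_or_ne k i with rfl | hki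
        · simp
        · simp [Pi.single_eq_of_ne hki]
    · -- legal firing sequence: fire every site once
      refine ⟨List.finRange n, ?_, ?_⟩
      · intro t ht i
        set u : Fin n → ℤ := fun i => ((((List.finRange n).take t).count i : ℕ) : ℤ) with hudef
        have hu0 : ∀ k, (0 : ℤ) ≤ u k := fun k => Int.ofNat_nonneg _
        have hu1 : ∀ k, u k ≤ 1 := by
          intro k
          have h1 : ((List.finRange n).take t).count k ≤ (List.finRange n).count k :=
            (List.take_sublist t _).count_le k
          have h2 : (List.finRange n).count k = 1 :=
            List.count_eq_one_of_mem (List.nodup_finRange n) (List.mem_finRange k)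
          rw [h2] at h1
          simp only [hudef]
          exact_mod_cast h1
        have hrep := rep (m' + (2 * (mneg : ℤ) + 1)) u
        rw [main _ _ hrep i]
        have hcc : ((m' + (2 * (mneg : ℤ) + 1) : ℤ) : ℚ) / (2 * (mneg : ℚ) + 1) = b + 1 := by
          push_cast
          rw [hbdef]
          field_simp
        refine estval _ ?_ ?_ i
        · intro k
          simp only [Pi.sub_apply, hcc]
          have : ((u k : ℤ) : ℚ) ≤ 1 := by exact_mod_cast hu1 k
          linarith
        · intro k
          simp only [Pi.sub_apply, hcc]
          have : (0 : ℚ) ≤ ((u k : ℤ) : ℚ) := by exact_mod_cast hu0 k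
          linarith
      · funext i
        have hcount : (List.finRange n).count i = 1 :=
          List.count_eq_one_of_mem (List.nodup_finRange n) (List.mem_finRange i)
        have hmv : L.mulVec (fun i => (((List.finRange n).count i : ℕ) : ℤ)) i
            = 2 * (mneg : ℤ) + 1 := by
          have : (fun i : Fin n => (((List.finRange n).count i : ℕ) : ℤ)) = fun _ => 1 := by
            funext k
            rw [List.count_eq_one_of_mem (List.nodup_finRange n) (List.mem_finRange k)]
            rfl
          rw [this]
          simp only [Matrix.mulVec, dotProduct, mul_one]
          exact rowL i
        simp only [Pi.sub_apply, hmv]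
        ring
  refine ⟨⟨hval1, hval1, hstab1, hreach⟩, ?_⟩
  -- Part 2: the all-negative case
  intro hLpos c hval hstab i
  -- in this case mneg = m - 1
  have hNadj : ∀ i j : Fin n, G.Adj i.castSucc j.castSucc → N i j = 2 := by
    intro i j h
    have hij : i ≠ j := by rintro rfl; exact G.loopless.irrefl _ h
    rcases hNval i j with h0 | h2
    · exfalso
      have hL : L i j = -1 := by rw [hLdef, Matrix.add_apply, Madj i j h, h0]; ring
      have := hLpos i j hij
      rw [hL] at this
      norm_num at this
    · exact h2
  have hN2adj : ∀ i j : Fin n, N i j = 2 → G.Adj i.castSucc j.castSucc := by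
    intro i j h
    have hM1 : M i j = -1 := hNsupp i j (by rw [h]; norm_num)
    by_contra hna
    by_cases hij : i = j
    · subst hij
      rw [Mdiag i] at hM1
      omega
    · rw [MnotAdj i j hij hna] at hM1
      norm_num at hM1
  have hAeq : ∀ i : Fin n, (Finset.univ.filter fun j => N i j = 2)
      = (Finset.univ.filter fun j : Fin n => G.Adj i.castSucc j.castSucc) := by
    intro i
    ext j
    simp only [Finset.mem_filter, Finset.mem_univ, true_and]
    exact ⟨hN2adj i j, hNadj i j⟩
  have hmnegN : mneg = m - 1 := by
    have h := hNrow ⟨0, hn⟩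
    rw [hAeq ⟨0, hn⟩, cardA ⟨0, hn⟩] at h
    omega
  have hmnegq : (mneg : ℚ) = (m : ℚ) - 1 := by
    rw [hmnegN, Nat.cast_sub hm1, Nat.cast_one]
  -- the vector z = L⁻¹ c over ℚ
  set c' : Fin n → ℚ := fun k => ((c k : ℤ) : ℚ) with hc'def
  set z : Fin n → ℚ := (L.map (Int.cast : ℤ → ℚ))⁻¹.mulVec c' with hzdef
  have hy : ∀ j : Fin n,
      (((M.map (Int.cast : ℤ → ℚ)) * (L.map (Int.cast : ℤ → ℚ))⁻¹).mulVec c') j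
        = (M.map (Int.cast : ℤ → ℚ)).mulVec z j := by
    intro j
    rw [hzdef, Matrix.mulVec_mulVec]
  have hy0 : ∀ j : Fin n, 0 ≤ (M.map (Int.cast : ℤ → ℚ)).mulVec z j := by
    intro j
    rw [← hy j]
    exact hval j
  -- stability forces (Mz)_j < m for every j
  have hylt : ∀ j : Fin n, (M.map (Int.cast : ℤ → ℚ)).mulVec z j < (m : ℚ) := by
    intro j
    have hnv := hstab j
    rw [cfValid] at hnv
    push_neg at hnv
    obtain ⟨k, hk⟩ := hnv
    -- rewrite the fired configuration
    have hsub : (fun l => (((c - L.mulVec (Pi.single j 1)) : Fin n → ℤ) l : ℚ))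
        = c' - (L.map (Int.cast : ℤ → ℚ)).mulVec
            (fun l => (((Pi.single j 1 : Fin n → ℤ) l : ℤ) : ℚ)) := by
      rw [← castVec (Pi.single j 1)]
      funext l
      simp only [Pi.sub_apply, hc'def]
      push_cast
      rfl
    rw [hsub, Matrix.mulVec_sub] at hk
    have hks : (((M.map (Int.cast : ℤ → ℚ)) * (L.map (Int.cast : ℤ → ℚ))⁻¹).mulVec
        ((L.map (Int.cast : ℤ → ℚ)).mulVec
          (fun l => (((Pi.single j 1 : Fin n → ℤ) l : ℤ) : ℚ)))) k
        = ((M k j : ℤ) : ℚ) := by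
      rw [hkey]
      simp [Matrix.mulVec, dotProduct, Matrix.map_apply, Pi.single_apply]
    rw [Pi.sub_apply, hks, hy k] at hk
    rcases eq_or_ne k j with rfl | hkj
    · rw [Mdiag k] at hk
      push_cast at hk ⊢
      linarith
    · exfalso
      have h1 : ((M k j : ℤ) : ℚ) ≤ 0 := by exact_mod_cast Mnonpos k j hkj
      have h2 := hy0 k
      linarith
  -- maximum principle: 0 ≤ z < m entrywise
  obtain ⟨i0, -, hmax⟩ := Finset.exists_max_image Finset.univ z ⟨⟨0, hn⟩, Finset.mem_univ _⟩
  obtain ⟨i1, -, hmin⟩ := Finset.exists_min_image Finset.univ z ⟨⟨0, hn⟩, Finset.mem_univ _⟩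
  have hzmax : ∀ k, z k ≤ z i0 := fun k => hmax k (Finset.mem_univ k)
  have hzmin : ∀ k, z i1 ≤ z k := fun k => hmin k (Finset.mem_univ k)
  have hzup : z i0 < (m : ℚ) := by
    have h := hylt i0
    rw [entryM i0 z] at h
    have hs : ((m : ℚ) - 1) * z i0
        ≥ ∑ k ∈ Finset.univ.filter (fun k : Fin n => G.Adj i0.castSucc k.castSucc), z k := by
      calc ∑ k ∈ Finset.univ.filter (fun k : Fin n => G.Adj i0.castSucc k.castSucc), z k
          ≤ (Finset.univ.filter (fun k : Fin n => G.Adj i0.castSucc k.castSucc)).card • z i0 :=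
            Finset.sum_le_card_nsmul _ _ _ (fun k _ => hzmax k)
        _ = ((m : ℚ) - 1) * z i0 := by rw [nsmul_eq_mul, cardAq i0]
    linarith
  have hzlo : 0 ≤ z i1 := by
    have h := hy0 i1
    rw [entryM i1 z] at h
    have hs : ((m : ℚ) - 1) * z i1
        ≤ ∑ k ∈ Finset.univ.filter (fun k : Fin n => G.Adj i1.castSucc k.castSucc), z k := by
      calc ((m : ℚ) - 1) * z i1
          = (Finset.univ.filter (fun k : Fin n => G.Adj i1.castSucc k.castSucc)).card • z i1 := by
            rw [nsmul_eq_mul, cardAq i1]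
        _ ≤ ∑ k ∈ Finset.univ.filter (fun k : Fin n => G.Adj i1.castSucc k.castSucc), z k :=
            Finset.card_nsmul_le_sum _ _ _ (fun k _ => hzmin k)
    linarith
  have hzm : ∀ k, z k < (m : ℚ) := fun k => lt_of_le_of_lt (hzmax k) hzup
  have hz0 : ∀ k, 0 ≤ z k := fun k => le_trans hzlo (hzmin k)
  -- recover c from z
  have hcz : c' = (L.map (Int.cast : ℤ → ℚ)).mulVec z := by
    rw [hzdef, Matrix.mulVec_mulVec, Matrix.mul_nonsing_inv _ hdet, Matrix.one_mulVec]
  -- off-diagonal row sum of L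
  have hLdiag : L i i = (m : ℤ) := by
    rw [hLdef, Matrix.add_apply, Mdiag i, hNdiag i]; ring
  have hLii : ((L i i : ℤ) : ℚ) = (m : ℚ) := by rw [hLdiag]; push_cast; rfl
  have hoffsum : ∑ k ∈ Finset.univ.erase i, ((L i k : ℤ) : ℚ) = (m : ℚ) - 1 := by
    have hsplit : ((L i i : ℤ) : ℚ) + ∑ k ∈ Finset.univ.erase i, ((L i k : ℤ) : ℚ)
        = ∑ k, ((L i k : ℤ) : ℚ) :=
      Finset.add_sum_erase Finset.univ (fun k => ((L i k : ℤ) : ℚ)) (Finset.mem_univ i)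
    rw [rowLq i, hLii, hmnegq] at hsplit
    linarith
  -- the final bound
  have hci : (c i : ℚ) = (m : ℚ) * z i
      + ∑ k ∈ Finset.univ.erase i, ((L i k : ℤ) : ℚ) * z k := by
    have h1 : (c i : ℚ) = ((L.map (Int.cast : ℤ → ℚ)).mulVec z) i := by
      rw [← hcz]
    rw [h1]
    have h2 : ((L.map (Int.cast : ℤ → ℚ)).mulVec z) i = ∑ k, ((L i k : ℤ) : ℚ) * z k := by
      simp [Matrix.mulVec, dotProduct, Matrix.map_apply]
    have h3 : ∑ k, ((L i k : ℤ) : ℚ) * z k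
        = ((L i i : ℤ) : ℚ) * z i + ∑ k ∈ Finset.univ.erase i, ((L i k : ℤ) : ℚ) * z k :=
      (Finset.add_sum_erase Finset.univ (fun k => ((L i k : ℤ) : ℚ) * z k)
        (Finset.mem_univ i)).symm
    rw [h2, h3, hLii]
  have hsum2 : ∑ k ∈ Finset.univ.erase i, ((L i k : ℤ) : ℚ) * z k
      ≤ ((m : ℚ) - 1) * (m : ℚ) := by
    calc ∑ k ∈ Finset.univ.erase i, ((L i k : ℤ) : ℚ) * z k
        ≤ ∑ k ∈ Finset.univ.erase i, ((L i k : ℤ) : ℚ) * (m : ℚ) := by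
          refine Finset.sum_le_sum fun k hk => ?_
          have hki : i ≠ k := (Finset.ne_of_mem_erase hk).symm
          have hLk : (0 : ℚ) ≤ ((L i k : ℤ) : ℚ) := by exact_mod_cast hLpos i k hki
          exact mul_le_mul_of_nonneg_left (le_of_lt (hzm k)) hLk
      _ = (∑ k ∈ Finset.univ.erase i, ((L i k : ℤ) : ℚ)) * (m : ℚ) := by
          rw [Finset.sum_mul]
      _ = ((m : ℚ) - 1) * (m : ℚ) := by rw [hoffsum]
  have hmpos : (0 : ℚ) < (m : ℚ) := by exact_mod_cast hm1
  have hzi : (m : ℚ) * z i < (m : ℚ) * (m : ℚ) :=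
    mul_lt_mul_of_pos_left (hzm i) hmpos
  have hfin : (c i : ℚ) < ((m' + 1 : ℤ) : ℚ) := by
    have hval' : ((m' + 1 : ℤ) : ℚ) = (m : ℚ) * (m : ℚ) + ((m : ℚ) - 1) * (m : ℚ) := by
      push_cast [hm']
      rw [hmnegq]
      ring
    rw [hval', hci]
    linarith
  have : c i < m' + 1 := by exact_mod_cast hfin
  omega
end

section
/- Let G be a finite connected simple graph with vertices v₁,…,v_n and sink q such that the induced subgraph of G on {v₁,…,v_n} is connected, and let M be the reduced Laplacian of G. Let c ∈ ℤⁿ have all entries ≥ 0 with c_k > 0 for some index k. Then there exists a positive integer N and a finite list of indices i₁,…,i_r such that every partial configuration N·c − Σ_{j≤ℓ} M·e_{i_j} (for ℓ ≤ r) has all entries ≥ 0, and the final configuration b = N·c − Σ_{j=1}^r M·e_{i_j} satisfies b_i ≥ deg(v_i) = M_{ii} for every index i. -/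
open Matrix


open List

/-- Two distinct members of a list: one precedes the other. -/
lemma aux_pair {α : Type*} {a b : α} : ∀ {vs : List α}, a ∈ vs → b ∈ vs → a ≠ b →
    [a, b] <+ vs ∨ [b, a] <+ vs := by
  intro vs
  induction vs with
  | nil => simp
  | cons v vs ih =>
    intro ha hb hne
    rcases List.mem_cons.1 ha with rfl | ha'
    · have hb' : b ∈ vs := by rcases List.mem_cons.1 hb with rfl | h; exact absurd rfl hne; exact h
      exact Or.inl ((List.singleton_sublist.2 hb').cons₂ a)
    · rcases List.mem_cons.1 hb with rfl | hb'
      · exact Or.inr ((List.singleton_sublist.2 ha').cons₂ b)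
      · rcases ih ha' hb' hne with h | h
        · exact Or.inl (h.cons v)
        · exact Or.inr (h.cons v)

lemma aux_count_flatMap {α : Type*} [DecidableEq α] (x : α → ℕ) :
    ∀ (vs : List α), vs.Nodup → ∀ j ∈ vs,
      (vs.flatMap fun v => List.replicate (x v) v).count j = x j := by
  intro vs
  induction vs with
  | nil => simp
  | cons v vs ih =>
    intro hnd j hj
    have hnd' := (List.nodup_cons.1 hnd).2
    have hv : v ∉ vs := (List.nodup_cons.1 hnd).1
    rw [List.flatMap_cons, List.count_append, List.count_replicate]
    rcases List.mem_cons.1 hj with rfl | hj'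
    · have : (vs.flatMap fun v => List.replicate (x v) v).count j = 0 := by
        rw [List.count_eq_zero]
        intro hmem
        obtain ⟨w, hw, hw2⟩ := List.mem_flatMap.1 hmem
        exact hv (by rwa [List.eq_of_mem_replicate hw2])
      simp [this]
    · have hne : v ≠ j := fun h => hv (h ▸ hj')
      rw [ih hnd' j hj']
      simp [hne]

lemma aux_mem_flatMap_rep {α : Type*} (x : α → ℕ) {vs : List α} {j : α}
    (h : j ∈ vs.flatMap fun v => List.replicate (x v) v) : j ∈ vs := by
  obtain ⟨w, hw, hw2⟩ := List.mem_flatMap.1 h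
  rwa [List.eq_of_mem_replicate hw2]

/-- Key prefix-counting lemma for block lists. -/
lemma aux_prefix {α : Type*} [DecidableEq α] (x : α → ℕ) :
    ∀ (vs : List α), vs.Nodup → ∀ (t : ℕ),
      (∀ j, ((vs.flatMap fun v => List.replicate (x v) v).take t).count j ≤ x j) ∧
      (∀ p i, [p, i] <+ vs →
        0 < ((vs.flatMap fun v => List.replicate (x v) v).take t).count i →
        ((vs.flatMap fun v => List.replicate (x v) v).take t).count p = x p) := by
  intro vs
  induction vs with
  | nil => intro _ t; constructor <;> simp
  | cons v vs ih =>
    intro hnd t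
    have hv : v ∉ vs := (List.nodup_cons.1 hnd).1
    have hnd' := (List.nodup_cons.1 hnd).2
    set rest := vs.flatMap fun v => List.replicate (x v) v with hrest
    have hsplit : ((v :: vs).flatMap fun v => List.replicate (x v) v).take t
        = List.replicate (min t (x v)) v ++ rest.take (t - x v) := by
      rw [List.flatMap_cons, List.take_append, List.take_replicate,
        List.length_replicate]
    have hcv : ∀ s, (rest.take s).count v = 0 := by
      intro s
      rw [List.count_eq_zero]
      intro hmem
      exact hv (aux_mem_flatMap_rep x ((List.take_sublist s rest).mem hmem))
    obtain ⟨ih1, ih2⟩ := ih hnd' (t - x v)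
    constructor
    · intro j
      rw [hsplit, List.count_append, List.count_replicate]
      by_cases hj : j = v
      · subst hj; simp [hcv, min_le_right]
      · have : (v == j) = false := by simp [Ne.symm hj]
        simp only [this, Bool.false_eq_true, if_false, Nat.zero_add]
        exact ih1 j
    · intro p i hsub hpos
      rw [hsplit, List.count_append, List.count_replicate] at hpos ⊢
      cases hsub with
      | cons _ hsub'' =>
        -- [p, i] <+ vs
        have hp : p ∈ vs := hsub''.subset (by simp)
        have hi : i ∈ vs := hsub''.subset (by simp)
        have hpv : p ≠ v := fun h => hv (h ▸ hp)
        have hiv : i ≠ v := fun h => hv (h ▸ hi)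
        have h1 : (v == i) = false := by simp [Ne.symm hiv]
        have h2 : (v == p) = false := by simp [Ne.symm hpv]
        simp only [h1, Bool.false_eq_true, if_false, Nat.zero_add] at hpos
        simp only [h2, Bool.false_eq_true, if_false, Nat.zero_add]
        exact ih2 p i hsub'' hpos
      | cons_cons _ hsub'' =>
        -- p = v, [i] <+ vs
        have hi : i ∈ vs := hsub''.subset (by simp)
        have hiv : i ≠ v := fun h => hv (h ▸ hi)
        have h1 : (v == i) = false := by simp [Ne.symm hiv]
        simp only [h1, Bool.false_eq_true, if_false, Nat.zero_add] at hpos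
        -- count i (rest.take (t - x v)) > 0 forces t ≥ x v
        have hxv : x v ≤ t := by
          by_contra hlt
          push_neg at hlt
          have : t - x v = 0 := Nat.sub_eq_zero_of_le (le_of_lt hlt)
          rw [this] at hpos; simp at hpos
        simp [hcv, Nat.min_eq_right hxv]

/-- Lemma `Redistribute`: classical chip-firing on a connected graph `G` with sink
`q = Fin.last n` whose nonsink part is connected.  For any nonnegative configuration `c`
with some positive entry, there is a positive integer `N` and a legal firing sequence
(list of fired nonsink vertices, each intermediate configuration nonnegative) starting
from `N·c` whose final configuration `b` satisfies `b i ≥ deg(v_i) = M i i` for all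
`i`. -/
theorem stmt18 (n : ℕ) (hn : 1 ≤ n)
    (G : SimpleGraph (Fin (n + 1))) [DecidableRel G.Adj] (hconn : G.Connected)
    (hconn' : (G.comap (fun i : Fin n => i.castSucc)).Connected)
    (M : Matrix (Fin n) (Fin n) ℤ)
    (hM : ∀ i j : Fin n, M i j =
      if i = j then (G.degree i.castSucc : ℤ)
      else if G.Adj i.castSucc j.castSucc then -1 else 0)
    (c : Fin n → ℤ) (hc0 : ∀ i, 0 ≤ c i) (k : Fin n) (hck : 0 < c k) :
    ∃ N : ℕ, 0 < N ∧ ∃ l : List (Fin n),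
      (∀ t ≤ l.length, ∀ i,
        0 ≤ ((N : ℤ) • c - M.mulVec (fun i => ((l.take t).count i : ℤ))) i) ∧
      (∀ i, M i i ≤ ((N : ℤ) • c - M.mulVec (fun i => (l.count i : ℤ))) i) := by
  classical
  set G' := G.comap (fun i : Fin n => i.castSucc) with hG'
  set d : Fin n → ℕ := fun i => G'.dist k i with hd
  set deg : Fin n → ℕ := fun i => G.degree i.castSucc with hdeg
  -- every nonsink vertex has positive degree
  have hdegpos : ∀ i : Fin n, 0 < deg i := by
    intro i
    rw [hdeg]
    rw [G.degree_pos_iff_exists_adj]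
    have hne : i.castSucc ≠ Fin.last n := (Fin.castSucc_lt_last i).ne
    have hpos := hconn.pos_dist_of_ne hne
    obtain ⟨w, hw⟩ := SimpleGraph.exists_walk_of_dist_ne_zero hpos.ne'
    exact ⟨w.getVert 1, SimpleGraph.Walk.adj_snd (SimpleGraph.Walk.not_nil_of_ne hne)⟩
  set D : ℕ := Finset.univ.sup deg with hD
  have hdegD : ∀ i : Fin n, deg i ≤ D := fun i => Finset.le_sup (Finset.mem_univ i)
  set B := D + 1 with hB
  have hdlt : ∀ i, d i < n := by
    intro i
    obtain ⟨p, hp, hlen⟩ := hconn'.exists_path_of_dist k i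
    have hlt := hp.length_lt
    rw [hlen] at hlt
    simpa [Fintype.card_fin] using hlt
  set x : Fin n → ℕ := fun i => B ^ (n - d i) with hx
  have hxB : ∀ i, B ≤ x i := by
    intro i
    rw [hx]
    calc B = B ^ 1 := (pow_one B).symm
    _ ≤ B ^ (n - d i) := Nat.pow_le_pow_right (by omega) (by have := hdlt i; omega)
  -- parent existence
  have hpar : ∀ i, i ≠ k → ∃ p, G'.Adj p i ∧ d p + 1 = d i := by
    intro i hik
    obtain ⟨w, hw, hlen⟩ := hconn'.exists_path_of_dist i k
    cases w with
    | nil => exact absurd rfl hik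
    | @cons _ v _ hadj q =>
      refine ⟨v, hadj.symm, ?_⟩
      rw [SimpleGraph.Walk.length_cons] at hlen
      have h1 : G'.dist v k ≤ q.length := SimpleGraph.dist_le q
      have h2 : G'.dist i k ≤ G'.dist i v + G'.dist v k := hconn'.dist_triangle
      have h3 : G'.dist i v = 1 := SimpleGraph.dist_eq_one_iff_adj.2 hadj
      have hik' : G'.dist i k = q.length + 1 := by omega
      have hdvk : G'.dist v k = q.length := by omega
      simp only [hd]
      rw [SimpleGraph.dist_comm (u := k) (v := v), SimpleGraph.dist_comm (u := k) (v := i)]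
      omega
  -- key arithmetic inequality
  have hkey : ∀ i, i ≠ k → ∀ p, d p + 1 = d i → deg i * x i + deg i + 1 ≤ x p := by
    intro i _ p hdp
    have h1 : x p = x i * B := by
      have h5 : n - d p = (n - d i) + 1 := by have := hdlt i; omega
      show B ^ (n - d p) = B ^ (n - d i) * B
      rw [h5, pow_succ]
    have h2 := hdegD i
    have h3 := hxB i
    have h4 := hdegpos i
    nlinarith [h1, h2, h3, h4]
  set N : ℕ := deg k * (x k + 1) with hN
  have hN0 : 0 < N := by
    have := hdegpos k
    have := hxB k
    positivity
  -- the sorted vertex list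
  set vs : List (Fin n) := (List.finRange n).mergeSort (fun a b => decide (d a ≤ d b)) with hvs
  have hperm : vs ~ List.finRange n := List.mergeSort_perm _ _
  have hnodup : vs.Nodup := hperm.nodup_iff.2 (List.nodup_finRange n)
  have hmem : ∀ j : Fin n, j ∈ vs := fun j => hperm.mem_iff.2 (List.mem_finRange j)
  have hsorted : List.Pairwise (fun a b => d a ≤ d b) vs := by
    have := List.pairwise_mergeSort (le := fun a b : Fin n => decide (d a ≤ d b))
      (fun a b c hab hbc => by simp at hab hbc ⊢; omega)
      (fun a b => by simp; omega) (List.finRange n)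
    exact this.imp (by simp)
  have hbefore : ∀ p i : Fin n, d p < d i → [p, i] <+ vs := by
    intro p i hlt
    have hne : p ≠ i := fun h => by rw [h] at hlt; omega
    rcases aux_pair (hmem p) (hmem i) hne with h | h
    · exact h
    · exfalso
      have := List.Pairwise.sublist h hsorted
      rw [List.pairwise_cons] at this
      have := this.1 p (by simp)
      omega
  set l : List (Fin n) := vs.flatMap fun v => List.replicate (x v) v with hl
  have hcountl : ∀ j, l.count j = x j := fun j => aux_count_flatMap x vs hnodup j (hmem j)
  -- diagonal and off-diagonal entries
  have hMd : ∀ i, M i i = (deg i : ℤ) := by intro i; rw [hM]; simp [hdeg]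
  have hMoff : ∀ i j, i ≠ j → M i j ≤ 0 := by
    intro i j hij
    rw [hM]
    simp only [if_neg hij]
    split <;> norm_num
  -- sum bounds
  have sumA : ∀ (cnt : Fin n → ℕ) (i : Fin n) (s : Finset (Fin n)), i ∉ s →
      ∑ j ∈ s, M i j * (cnt j : ℤ) ≤ 0 := by
    intro cnt i s his
    apply Finset.sum_nonpos
    intro j hj
    have hij : i ≠ j := fun h => his (h ▸ hj)
    exact mul_nonpos_of_nonpos_of_nonneg (hMoff i j hij) (by positivity)
  have sumB : ∀ (cnt : Fin n → ℕ) (i p : Fin n), p ≠ i → G'.Adj p i →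
      ∑ j ∈ Finset.univ.erase i, M i j * (cnt j : ℤ) ≤ -(cnt p : ℤ) := by
    intro cnt i p hpi hadj
    have hp : p ∈ Finset.univ.erase i := Finset.mem_erase.2 ⟨hpi, Finset.mem_univ p⟩
    rw [← Finset.add_sum_erase _ _ hp]
    have hMip : M i p = -1 := by
      rw [hM]
      have h1 : ¬ i = p := fun h => hpi h.symm
      have h2 : G.Adj i.castSucc p.castSucc := ((SimpleGraph.comap_adj.1 hadj)).symm
      simp [h1, h2]
    rw [hMip]
    have := sumA cnt i ((Finset.univ.erase i).erase p)
      (fun h => (Finset.mem_erase.1 (Finset.mem_erase.1 h).2).1 rfl)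
    linarith
  -- value expansion
  have hval : ∀ (cnt : Fin n → ℕ) (i : Fin n),
      ((N : ℤ) • c - M.mulVec (fun j => (cnt j : ℤ))) i
        = (N : ℤ) * c i - ((deg i : ℤ) * cnt i + ∑ j ∈ Finset.univ.erase i, M i j * (cnt j : ℤ)) := by
    intro cnt i
    simp only [Pi.sub_apply, Pi.smul_apply, smul_eq_mul, Matrix.mulVec, dotProduct]
    rw [← Finset.add_sum_erase _ (fun j => M i j * (cnt j : ℤ)) (Finset.mem_univ i), hMd]
  -- generic nonnegativity for admissible counts
  have main0 : ∀ (cnt : Fin n → ℕ), (∀ j, cnt j ≤ x j) →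
      (∀ p i, [p, i] <+ vs → 0 < cnt i → cnt p = x p) →
      ∀ i, 0 ≤ ((N : ℤ) • c - M.mulVec (fun j => (cnt j : ℤ))) i := by
    intro cnt h1 h2 i
    rw [hval]
    have hAi := sumA cnt i (Finset.univ.erase i) (fun h => (Finset.mem_erase.1 h).1 rfl)
    have hNc : 0 ≤ (N : ℤ) * c i := mul_nonneg (by positivity) (hc0 i)
    rcases Nat.eq_zero_or_pos (cnt i) with hz | hpos
    · rw [hz]
      push_cast
      linarith
    · by_cases hik : i = k
      · subst hik
        have hcx := h1 i
        have hc1 : (1 : ℤ) ≤ c i := hck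
        have hle : (deg i : ℤ) * cnt i ≤ (N : ℤ) := by
          have : deg i * cnt i ≤ N := by
            rw [hN]
            calc deg i * cnt i ≤ deg i * x i := Nat.mul_le_mul_left _ hcx
            _ ≤ deg i * (x i + 1) := Nat.mul_le_mul_left _ (by omega)
          exact_mod_cast this
        nlinarith [hle, hc1, hAi, Int.natCast_nonneg N]
      · obtain ⟨p, hadj, hdp⟩ := hpar i hik
        have hpi : p ≠ i := fun h => by rw [h] at hdp; omega
        have hsub : [p, i] <+ vs := hbefore p i (by omega)
        have hcp : cnt p = x p := h2 p i hsub hpos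
        have hBi := sumB cnt i p hpi hadj
        have hk2 := hkey i hik p hdp
        have hcx := h1 i
        have h3 : (deg i : ℤ) * cnt i ≤ (x p : ℤ) := by
          have : deg i * cnt i ≤ x p := by
            calc deg i * cnt i ≤ deg i * x i := Nat.mul_le_mul_left _ hcx
            _ ≤ x p := by omega
          exact_mod_cast this
        rw [hcp] at hBi
        linarith
  refine ⟨N, hN0, l, ?_, ?_⟩
  · intro t _ i
    obtain ⟨h1, h2⟩ := aux_prefix x vs hnodup t
    exact main0 (fun j => (l.take t).count j) h1 h2 i
  · intro i
    have hfin : (fun j => ((l.count j : ℕ) : ℤ)) = fun j => ((x j : ℕ) : ℤ) := by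
      funext j; rw [hcountl]
    rw [show (fun j => ((l.count j : ℕ) : ℤ)) = fun j => ((x j : ℕ) : ℤ) from hfin]
    rw [hval, hMd]
    by_cases hik : i = k
    · subst hik
      have hAi := sumA x i (Finset.univ.erase i) (fun h => (Finset.mem_erase.1 h).1 rfl)
      have hc1 : (1 : ℤ) ≤ c i := hck
      have hle : (deg i : ℤ) * x i + deg i ≤ (N : ℤ) := by
        have : deg i * x i + deg i ≤ N := by rw [hN]; ring_nf; omega
        exact_mod_cast this
      nlinarith [hAi, hc1, hle, Int.natCast_nonneg N]
    · obtain ⟨p, hadj, hdp⟩ := hpar i hik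
      have hpi : p ≠ i := fun h => by rw [h] at hdp; omega
      have hBi := sumB x i p hpi hadj
      have hk2 := hkey i hik p hdp
      have hNc : 0 ≤ (N : ℤ) * c i := mul_nonneg (by positivity) (hc0 i)
      have h3 : (deg i : ℤ) * x i + deg i + 1 ≤ (x p : ℤ) := by exact_mod_cast hk2
      linarith
end

section
/- Let n ≥ 1, let M be an n×n symmetric integer matrix with M_{ij} ∈ {0, −1} for i ≠ j, and suppose that the simple graph T on vertex set {1,…,n} with an edge {i,j} exactly when M_{ij} = −1 is a tree (connected and acyclic). Let L = M + N where N is a symmetric integer matrix, zero on the diagonal, with entries in {0,2} supported on positions where M_{ij} = −1. Then the abelian groups ℤⁿ/(image of L as a ℤ-linear map) and ℤⁿ/(image of M) are isomorphic. -/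
open Matrix

/-- On a tree, any symmetric `ℤˣ`-valued edge labelling is a "coboundary":
there is a vertex sign function `ε` with `ε i * ε j = s i j` on edges. -/
lemma exists_sign_aux (n : ℕ) (hn : 1 ≤ n) (T : SimpleGraph (Fin n)) (hTree : T.IsTree)
    (s : Fin n → Fin n → ℤˣ) (hs : ∀ i j, s i j = s j i) :
    ∃ ε : Fin n → ℤˣ, ∀ i j, T.Adj i j → ε i * ε j = s i j := by
  classical
  -- the coboundary homomorphism
  let φ : (Fin n → ℤˣ) →* (T.edgeSet → ℤˣ) :=
  { toFun := fun ε e => Sym2.lift ⟨fun i j => ε i * ε j, fun i j => mul_comm _ _⟩ e.1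
    map_one' := by
      funext e
      obtain ⟨e, he⟩ := e
      induction e using Sym2.ind with
      | _ i j => simp
    map_mul' := fun a b => by
      funext e
      obtain ⟨e, he⟩ := e
      induction e using Sym2.ind with
      | _ i j =>
        simp only [Sym2.lift_mk, Pi.mul_apply]
        exact mul_mul_mul_comm _ _ _ _ }
  -- the constant homomorphism
  let c : ℤˣ →* (Fin n → ℤˣ) :=
  { toFun := fun u _ => u
    map_one' := rfl
    map_mul' := fun _ _ => rfl }
  have hcinj : Function.Injective c := by
    intro a b h
    exact congrFun h ⟨0, hn⟩
  -- kernel of φ is exactly the constants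
  have hker : φ.ker = c.range := by
    apply le_antisymm
    · intro ε hε
      have hadj : ∀ i j, T.Adj i j → ε i = ε j := by
        intro i j hij
        have := congrFun hε ⟨s(i, j), T.mem_edgeSet.mpr hij⟩
        simp only [φ, MonoidHom.coe_mk, OneHom.coe_mk, Sym2.lift_mk] at this
        have h1 : ε i * ε j = 1 := this
        calc ε i = (ε j)⁻¹ := eq_inv_of_mul_eq_one_left h1
        _ = ε j := Int.units_inv_eq_self _
      have hwalk : ∀ u v : Fin n, ∀ _ : T.Walk u v, ε u = ε v := by
        intro u v w
        induction w with
        | nil => rfl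
        | cons h p ih => exact (hadj _ _ h).trans ih
      refine ⟨ε ⟨0, hn⟩, ?_⟩
      funext v
      exact hwalk _ _ ((hTree.isConnected.preconnected ⟨0, hn⟩ v).some)
    · rintro _ ⟨u, rfl⟩
      have : φ (c u) = 1 := by
        funext e
        obtain ⟨e, he⟩ := e
        induction e using Sym2.ind with
        | _ i j =>
          show u * u = 1
          exact Int.units_mul_self u
      exact this
  -- cardinality computations
  have hcardE : Fintype.card T.edgeSet = n - 1 := by
    have h := hTree.card_edgeFinset
    rw [Fintype.card_fin] at h
    rw [← SimpleGraph.edgeFinset_card]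
    omega
  have hker2 : Nat.card φ.ker = 2 := by
    rw [hker]
    rw [Nat.card_congr (MonoidHom.ofInjective hcinj).toEquiv.symm]
    simp [Nat.card_eq_fintype_card, Fintype.card_units_int]
  have hdom : Nat.card (Fin n → ℤˣ) = 2 ^ n := by
    simp [Nat.card_eq_fintype_card, Fintype.card_fun, Fintype.card_units_int]
  have hcod : Nat.card (T.edgeSet → ℤˣ) = 2 ^ (n - 1) := by
    simp [Nat.card_eq_fintype_card, Fintype.card_fun, Fintype.card_units_int, hcardE]
  have hquot : Nat.card ((Fin n → ℤˣ) ⧸ φ.ker) = Nat.card φ.range :=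
    Nat.card_congr (QuotientGroup.quotientKerEquivRange φ).toEquiv
  have hcardeq : Nat.card (Fin n → ℤˣ) = Nat.card ((Fin n → ℤˣ) ⧸ φ.ker) * Nat.card φ.ker :=
    Subgroup.card_eq_card_quotient_mul_card_subgroup φ.ker
  have hrange : Nat.card φ.range = 2 ^ (n - 1) := by
    rw [hdom, hquot, hker2] at hcardeq
    have h2n : 2 ^ n = 2 ^ (n - 1) * 2 := by
      rw [← pow_succ]
      congr 1
      omega
    omega
  have htop : φ.range = ⊤ :=
    Subgroup.eq_top_of_card_eq _ (by rw [hrange, hcod])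
  have hsurj : Function.Surjective φ := MonoidHom.range_eq_top.mp htop
  -- apply surjectivity to the given edge labelling
  obtain ⟨ε, hε⟩ := hsurj (fun e => Sym2.lift ⟨s, hs⟩ e.1)
  refine ⟨ε, fun i j hij => ?_⟩
  have := congrFun hε ⟨s(i, j), T.mem_edgeSet.mpr hij⟩
  simpa [φ, Sym2.lift_mk] using this

/-- Corollary `treegroup`: let `M` be a symmetric integer matrix whose off-diagonal
entries lie in `{0, -1}` and whose associated graph `T` (edge `{i,j}` iff `M i j = -1`)
is a tree, and let `L = M + N` where `N` is symmetric, zero on the diagonal, with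
entries in `{0, 2}` supported where `M i j = -1`.  Then `ℤⁿ/im L ≅ ℤⁿ/im M`. -/
theorem stmt19 (n : ℕ) (hn : 1 ≤ n)
    (M : Matrix (Fin n) (Fin n) ℤ)
    (hMsymm : ∀ i j, M i j = M j i)
    (hMoff : ∀ i j, i ≠ j → M i j = 0 ∨ M i j = -1)
    (T : SimpleGraph (Fin n))
    (hT : ∀ i j, T.Adj i j ↔ i ≠ j ∧ M i j = -1)
    (hTree : T.IsTree)
    (N : Matrix (Fin n) (Fin n) ℤ)
    (hNsymm : ∀ i j, N i j = N j i)
    (hNdiag : ∀ i, N i i = 0)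
    (hNval : ∀ i j, N i j = 0 ∨ N i j = 2)
    (hNsupp : ∀ i j, N i j ≠ 0 → M i j = -1) :
    Nonempty (((Fin n → ℤ) ⧸ LinearMap.range (Matrix.toLin' (M + N))) ≃+
      ((Fin n → ℤ) ⧸ LinearMap.range (Matrix.toLin' M))) := by
  classical
  -- the edge sign labelling
  set s : Fin n → Fin n → ℤˣ := fun i j => if N i j = 2 then -1 else 1 with hs_def
  have hs : ∀ i j, s i j = s j i := by
    intro i j
    simp only [hs_def, hNsymm i j]
  obtain ⟨ε, hε⟩ := exists_sign_aux n hn T hTree s hs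
  -- the switching matrix
  set D : Matrix (Fin n) (Fin n) ℤ := Matrix.diagonal (fun i => (ε i : ℤ)) with hD_def
  have hDD : D * D = 1 := by
    rw [hD_def, Matrix.diagonal_mul_diagonal]
    ext i j
    rcases eq_or_ne i j with rfl | h
    · simp [Int.units_mul_self]
    · simp [Matrix.diagonal_apply_ne _ h, Matrix.one_apply_ne h]
  -- L = D M D
  have hL : M + N = D * M * D := by
    ext i j
    have hDMD : (D * M * D) i j = (ε i : ℤ) * M i j * (ε j : ℤ) := by
      rw [hD_def, Matrix.mul_diagonal, Matrix.diagonal_mul]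
    rw [Matrix.add_apply, hDMD]
    rcases eq_or_ne i j with rfl | hij
    · rw [hNdiag]
      have h1 : (ε i : ℤ) * (ε i : ℤ) = 1 := by
        rw [← Units.val_mul, Int.units_mul_self, Units.val_one]
      linear_combination (-(M i i)) * h1
    · rcases hMoff i j hij with h0 | h1
      · have : N i j = 0 := by
          by_contra hne
          have := hNsupp i j hne
          omega
        rw [h0, this]; ring
      · have hadj : T.Adj i j := (hT i j).mpr ⟨hij, h1⟩
        have hεij := hε i j hadj
        have hεv : (ε i : ℤ) * (ε j : ℤ) = ((s i j : ℤˣ) : ℤ) := by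
          rw [← Units.val_mul, hεij]
        rcases hNval i j with h2 | h2
        · have : s i j = 1 := by simp [hs_def, h2]
          rw [this] at hεv
          simp only [Units.val_one] at hεv
          rw [h1, h2]
          linear_combination hεv
        · have : s i j = -1 := by simp [hs_def, h2]
          rw [this] at hεv
          simp only [Units.val_neg, Units.val_one] at hεv
          rw [h1, h2]
          linear_combination hεv
  -- the linear equivalence given by D
  have hcomp : (Matrix.toLin' D).comp (Matrix.toLin' D) = LinearMap.id := by
    rw [← Matrix.toLin'_mul, hDD, Matrix.toLin'_one]
  let e : (Fin n → ℤ) ≃ₗ[ℤ] (Fin n → ℤ) :=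
    LinearEquiv.ofLinear (Matrix.toLin' D) (Matrix.toLin' D) hcomp hcomp
  have hrange : LinearMap.range (Matrix.toLin' (M + N)) =
      Submodule.map (e : (Fin n → ℤ) →ₗ[ℤ] (Fin n → ℤ)) (LinearMap.range (Matrix.toLin' M)) := by
    rw [hL]
    have h1 : Matrix.toLin' (D * M * D) =
        (Matrix.toLin' D).comp ((Matrix.toLin' M).comp (Matrix.toLin' D)) := by
      rw [mul_assoc, Matrix.toLin'_mul, Matrix.toLin'_mul]
    rw [h1, LinearMap.range_comp, LinearMap.range_comp]
    congr 1
    have hsurjD : Function.Surjective (Matrix.toLin' D) := e.surjective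
    rw [LinearMap.range_eq_top.mpr hsurjD, Submodule.map_top]
  refine ⟨?_⟩
  have equiv := Submodule.Quotient.equiv (LinearMap.range (Matrix.toLin' M))
      (LinearMap.range (Matrix.toLin' (M + N))) e (by rw [hrange])
  exact equiv.symm.toAddEquiv
end
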